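/- Every simple directed path (v_0, v_1, ..., v_n) in a rooted cactus digraph (G, r) is single-dipped with respect to the preorder ≼: there exists k ∈ [0, n] such that v_0 ≽ v_1 ≽ ... ≽ v_k ≼ v_{k+1} ≼ ... ≼ v_n. -/

import Mathlib

structure DirGraph (V : Type) where
  Adj : V → V → Prop
  loopless : ∀ v, ¬ Adj v v

namespace DirGraph

variable {V V' : Type}

/-- A walk is a nonempty list of vertices with consecutive arcs. -/
def IsWalk (G : DirGraph V) : List V → Prop
  | [] => False
  | [_] => True
  | a :: b :: l => G.Adj a b ∧ G.IsWalk (b :: l)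

def IsWalkFromTo (G : DirGraph V) (p : List V) (x y : V) : Prop :=
  G.IsWalk p ∧ p.head? = some x ∧ p.getLast? = some y

def StronglyConnected (G : DirGraph V) : Prop :=
  ∀ x y : V, ∃ p, G.IsWalkFromTo p x y

def IsSimplePath (G : DirGraph V) (p : List V) : Prop :=
  G.IsWalk p ∧ p.Nodup

def IsSimplePathFromTo (G : DirGraph V) (p : List V) (x y : V) : Prop :=
  G.IsSimplePath p ∧ p.head? = some x ∧ p.getLast? = some y

/-- The arcs of a walk given as a list of vertices. -/
def arcs (p : List V) : List (V × V) := p.zip p.tail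

/-- The preterminal (second-to-last) vertex of a path. -/
def preterminal (p : List V) : Option V := p.dropLast.getLast?

/-- A simple cycle: a closed walk whose vertices are distinct except for the
repeated endpoint. -/
def IsSimpleCycle (G : DirGraph V) (p : List V) : Prop :=
  G.IsWalk p ∧ 2 ≤ p.length ∧ p.head? = p.getLast? ∧ p.dropLast.Nodup

/-- Two cycles are equal as cycles when they have the same set of arcs. -/
def CycleEquiv (p q : List V) : Prop :=
  ∀ a : V × V, a ∈ arcs p ↔ a ∈ arcs q

/-- Each arc lies in exactly one simple cycle (up to arc-set equality). -/
def CactusArcCond (G : DirGraph V) : Prop :=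
  ∀ x y, G.Adj x y →
    (∃ p, G.IsSimpleCycle p ∧ (x, y) ∈ arcs p) ∧
    (∀ p q, G.IsSimpleCycle p → (x, y) ∈ arcs p →
      G.IsSimpleCycle q → (x, y) ∈ arcs q → CycleEquiv p q)

/-- A cactus digraph: strongly connected and each arc lies in exactly one
simple cycle. -/
def IsCactus (G : DirGraph V) : Prop :=
  G.StronglyConnected ∧ G.CactusArcCond

noncomputable def inDeg (G : DirGraph V) (v : V) : ℕ := Nat.card {u // G.Adj u v}
noncomputable def outDeg (G : DirGraph V) (v : V) : ℕ := Nat.card {u // G.Adj v u}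

/-- A connecting point: a vertex shared by two distinct simple cycles. -/
def IsConnectingPoint (G : DirGraph V) (v : V) : Prop :=
  ∃ p q, G.IsSimpleCycle p ∧ G.IsSimpleCycle q ∧ ¬ CycleEquiv p q ∧ v ∈ p ∧ v ∈ q

/-- An expansion of digraphs. -/
structure IsExpansion (G' : DirGraph V') (G : DirGraph V) (φ : V' → V) : Prop where
  map_adj : ∀ ⦃x y⦄, G'.Adj x y → G.Adj (φ x) (φ y)
  vert_surj : Function.Surjective φ
  arc_surj : ∀ ⦃x y⦄, G.Adj x y → ∃ x' y', G'.Adj x' y' ∧ φ x' = x ∧ φ y' = y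
  lift : ∀ ⦃x y⦄, G.Adj x y → ∀ y', φ y' = y → ∃! x', G'.Adj x' y' ∧ φ x' = x

/-- A doubly bidirectionally connected pair. -/
def Dbcp (G : DirGraph V) (p q : V) : Prop :=
  p ≠ q ∧
  (∃ P Q, G.IsSimplePathFromTo P p q ∧ G.IsSimplePathFromTo Q p q ∧
    preterminal P ≠ preterminal Q) ∧
  (∃ P Q, G.IsSimplePathFromTo P q p ∧ G.IsSimplePathFromTo Q q p ∧
    preterminal P ≠ preterminal Q)

/-- Subgraph of a digraph: a vertex subset together with a subrelation of arcs
supported on it. -/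
structure Subgraph (G : DirGraph V) where
  verts : Set V
  Adj : V → V → Prop
  adj_sub : ∀ ⦃x y⦄, Adj x y → G.Adj x y
  mem_left : ∀ ⦃x y⦄, Adj x y → x ∈ verts
  mem_right : ∀ ⦃x y⦄, Adj x y → y ∈ verts

def Subgraph.toDirGraph {G : DirGraph V} (H : Subgraph G) : DirGraph V :=
  ⟨H.Adj, fun v h => G.loopless v (H.adj_sub h)⟩

/-- A sub-cactus digraph: a nonempty subgraph that is strongly connected (on
its vertex set) and in which each arc lies in exactly one simple cycle. -/
def Subgraph.IsCactus {G : DirGraph V} (H : Subgraph G) : Prop :=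
  H.verts.Nonempty ∧
  (∀ x ∈ H.verts, ∀ y ∈ H.verts, ∃ p, H.toDirGraph.IsWalkFromTo p x y) ∧
  H.toDirGraph.CactusArcCond

def Subgraph.inter {G : DirGraph V} (H K : Subgraph G) : Subgraph G where
  verts := H.verts ∩ K.verts
  Adj x y := H.Adj x y ∧ K.Adj x y
  adj_sub := fun _ _ h => H.adj_sub h.1
  mem_left := fun _ _ h => ⟨H.mem_left h.1, K.mem_left h.2⟩
  mem_right := fun _ _ h => ⟨H.mem_right h.1, K.mem_right h.2⟩

def Subgraph.le {G : DirGraph V} (H K : Subgraph G) : Prop :=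
  H.verts ⊆ K.verts ∧ ∀ ⦃x y⦄, H.Adj x y → K.Adj x y

/-- The single-vertex subgraph. -/
def singleVert (G : DirGraph V) (v : V) : Subgraph G where
  verts := {v}
  Adj _ _ := False
  adj_sub := by intro _ _ h; exact h.elim
  mem_left := by intro _ _ h; exact h.elim
  mem_right := by intro _ _ h; exact h.elim

/-- The intersection of all sub-cactus digraphs of `G` containing `W`. -/
def CsubOf (G : DirGraph V) (W : Set V) : Subgraph G where
  verts := {x | ∀ H : Subgraph G, H.IsCactus → W ⊆ H.verts → x ∈ H.verts}
  Adj x y := G.Adj x y ∧ ∀ H : Subgraph G, H.IsCactus → W ⊆ H.verts → H.Adj x y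
  adj_sub := fun _ _ h => h.1
  mem_left := fun _ _ h H hH hW => H.mem_left (h.2 H hH hW)
  mem_right := fun _ _ h H hH hW => H.mem_right (h.2 H hH hW)

open Classical in
/-- `C G r v`: the minimum sub-cactus digraph containing `{r, v}` (and the
single vertex `{r}` when `v = r`). -/
noncomputable def C (G : DirGraph V) (r v : V) : Subgraph G :=
  if v = r then singleVert G r else CsubOf G {r, v}

/-- The preorder on vertices of the rooted cactus digraph `(G, r)`:
`v ≼ w ↔ C(v) ⊆ C(w)`. -/
def pre (G : DirGraph V) (r v w : V) : Prop :=
  Subgraph.le (C G r v) (C G r w)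

end DirGraph

/-!
If `v_{i+1} ⋠ v_i` and `v_j ⋠ v_{j+1}` for some `i ≤ j`, the definition of `C` yields sub-cacti
`H ∋ r, v_i` avoiding `v_{i+1}` and `K ∋ r, v_{j+1}` avoiding `v_j`. Since every arc lies on a
unique simple cycle, a sub-cactus containing one arc of a cycle contains all of them; so when an
arc `x → y` is not in a sub-cactus, a walk from `y` to `x` closes up to a cycle with no arc in it.
Consequently a walk that leaves a sub-cactus along `x → y` can only come back through `x`, and a
walk from the sub-cactus to `x` must pass through `y` when `y` belongs to it. The first fact,
applied to `v_{i+1} … v_{j+1}` followed by a walk in `K` back to `r`, puts `v_i` in `K`; the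
second, applied to `v_i … v_j`, puts `v_{j+1}` on that segment, contradicting simplicity. So every
strict descent comes before every strict ascent.
-/

theorem Nat.exists_split_of_forall_le_or {P Q : ℕ → Prop} {n : ℕ}
    (h : ∀ i j, i ≤ j → j < n → P i ∨ Q j) :
    ∃ k, ∀ i < n, (i < k → P i) ∧ (k ≤ i → Q i) := by
  classical
  have hQ : ∃ k, ∀ j, k ≤ j → j < n → Q j := ⟨n, fun j hnj hjn => absurd hjn (by omega)⟩
  refine ⟨Nat.find hQ, fun i hi => ⟨fun hik => ?_, fun hki => Nat.find_spec hQ i hki hi⟩⟩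
  obtain ⟨j, hj, hjn, hnQ⟩ : ∃ j, Nat.find hQ - 1 ≤ j ∧ j < n ∧ ¬ Q j := by
    have hmin := Nat.find_min hQ (show Nat.find hQ - 1 < Nat.find hQ by omega)
    push Not at hmin
    exact hmin
  exact (h i j (by omega) hjn).resolve_right hnQ

namespace DirGraph

variable {V : Type} {G : DirGraph V}

@[simp]
lemma arcs_cons_cons (a b : V) (l : List V) : arcs (a :: b :: l) = (a, b) :: arcs (b :: l) :=
  rfl

lemma arcs_append_cons (xs : List V) (y : V) (ys : List V) :
    arcs (xs ++ y :: ys) = arcs (xs ++ [y]) ++ arcs (y :: ys) := by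
  induction xs with
  | nil => rfl
  | cons a xs ih => cases xs with
    | nil => rfl
    | cons b t => simpa using ih

lemma arcs_append_tail {p q : List V} {y : V} (hp : p.getLast? = some y)
    (hq : q.head? = some y) : arcs (p ++ q.tail) = arcs p ++ arcs q := by
  obtain ⟨p, rfl⟩ := List.getLast?_eq_some_iff.1 hp
  obtain ⟨q, rfl⟩ := List.head?_eq_some_iff.1 hq
  simpa using arcs_append_cons p y q

lemma fst_mem_of_mem_arcs {p : List V} {a : V × V} (h : a ∈ arcs p) : a.1 ∈ p :=
  (List.of_mem_zip h).1

lemma snd_mem_of_mem_arcs {p : List V} {a : V × V} (h : a ∈ arcs p) : a.2 ∈ p :=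
  List.mem_of_mem_tail (List.of_mem_zip h).2

lemma head?_eq_or_exists_mem_arcs {p : List V} {v : V} (hv : v ∈ p) :
    p.head? = some v ∨ ∃ u, (u, v) ∈ arcs p := by
  induction p with
  | nil => simp at hv
  | cons a l ih =>
    rcases List.mem_cons.1 hv with rfl | hv
    · exact Or.inl rfl
    · obtain ⟨b, t, rfl⟩ := List.exists_cons_of_ne_nil (List.ne_nil_of_mem hv)
      rcases ih hv with h | ⟨u, hu⟩
      · exact Or.inr ⟨a, by simp_all⟩
      · exact Or.inr ⟨u, by simp [hu]⟩

lemma exists_mem_arcs_of_head? {p : List V} {x y : V} (hx : p.head? = some x)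
    (hy : p.getLast? = some y) (hxy : x ≠ y) : ∃ z, (x, z) ∈ arcs p := by
  obtain ⟨t, rfl⟩ := List.head?_eq_some_iff.1 hx
  obtain ⟨z, t, rfl⟩ := List.exists_cons_of_ne_nil (l := t) (by rintro rfl; simp_all)
  exact ⟨z, by simp⟩

lemma exists_mem_arcs_of_getLast? {p : List V} {x y : V} (hx : p.head? = some x)
    (hy : p.getLast? = some y) (hxy : x ≠ y) : ∃ w, (w, y) ∈ arcs p := by
  obtain ⟨s, rfl⟩ := List.getLast?_eq_some_iff.1 hy
  obtain rfl | ⟨s, w, rfl⟩ := List.eq_nil_or_concat s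
  · simp_all
  · refine ⟨w, ?_⟩
    rw [List.concat_eq_append, List.append_assoc, List.singleton_append, arcs_append_cons]
    simp

lemma isWalk_iff {p : List V} : G.IsWalk p ↔ p ≠ [] ∧ ∀ a ∈ arcs p, G.Adj a.1 a.2 := by
  induction p with
  | nil => simp [IsWalk]
  | cons a l ih => cases l with
    | nil => simp [IsWalk, arcs]
    | cons b t => simp [IsWalk, ih]

lemma isWalk_iff_isChain {p : List V} : G.IsWalk p ↔ p ≠ [] ∧ p.IsChain G.Adj := by
  induction p with
  | nil => simp [IsWalk]
  | cons a l ih => cases l with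
    | nil => simp [IsWalk]
    | cons b t => simp [IsWalk, ih]

lemma IsWalk.adj_of_mem_arcs {p : List V} (hp : G.IsWalk p) {a : V × V} (ha : a ∈ arcs p) :
    G.Adj a.1 a.2 :=
  (isWalk_iff.1 hp).2 a ha

lemma IsWalk.adj_getElem {p : List V} (hp : G.IsWalk p) {i : ℕ} (hi : i + 1 < p.length) :
    G.Adj (p[i]'(Nat.lt_of_succ_lt hi)) p[i + 1] :=
  (isWalk_iff_isChain.1 hp).2.getElem i hi

lemma IsWalkFromTo.append {p q : List V} {x y z : V} (hp : G.IsWalkFromTo p x y)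
    (hq : G.IsWalkFromTo q y z) : G.IsWalkFromTo (p ++ q.tail) x z := by
  obtain ⟨hpW, hpx, hpy⟩ := hp
  obtain ⟨hqW, hqy, hqz⟩ := hq
  obtain ⟨p, rfl⟩ := List.getLast?_eq_some_iff.1 hpy
  obtain ⟨q, rfl⟩ := List.head?_eq_some_iff.1 hqy
  refine ⟨isWalk_iff.2 ⟨by simp, fun a ha => ?_⟩, by cases p <;> simp_all, by simp_all⟩
  rw [List.append_assoc, List.singleton_append, List.tail_cons, arcs_append_cons,
    List.mem_append] at ha
  exact ha.elim hpW.adj_of_mem_arcs hqW.adj_of_mem_arcs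

lemma IsWalk.of_arcs_subset {p q : List V} (hp : G.IsWalk p) (hq : q ≠ [])
    (h : arcs q ⊆ arcs p) : G.IsWalk q :=
  isWalk_iff.2 ⟨hq, fun _ ha => hp.adj_of_mem_arcs (h ha)⟩

lemma IsWalkFromTo.exists_isSimplePathFromTo {W : List V} {x y : V}
    (hW : G.IsWalkFromTo W x y) : ∃ P, G.IsSimplePathFromTo P x y ∧ arcs P ⊆ arcs W := by
  induction W generalizing x with
  | nil => exact hW.1.elim
  | cons a l ih =>
    obtain ⟨hWW, hWx, hWy⟩ := hW
    obtain rfl : a = x := by simpa using hWx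
    obtain _ | ⟨b, t⟩ := l
    · exact ⟨[a], ⟨⟨trivial, List.nodup_singleton a⟩, hWx, hWy⟩, fun _ h => h⟩
    obtain ⟨hab, hbt⟩ := hWW
    obtain ⟨P, ⟨⟨hPW, hPnd⟩, hPb, hPy⟩, hPsub⟩ :=
      ih (x := b) ⟨hbt, rfl, by rwa [List.getLast?_cons_cons] at hWy⟩
    have hsub : arcs (b :: t) ⊆ arcs (a :: b :: t) := by simp
    by_cases ha : a ∈ P
    · obtain ⟨s, u, rfl⟩ := List.append_of_mem ha
      have hu : arcs (a :: u) ⊆ arcs (s ++ a :: u) := by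
        rw [arcs_append_cons]; exact List.subset_append_right _ _
      refine ⟨a :: u, ⟨⟨hPW.of_arcs_subset (by simp) hu, hPnd.of_append_right⟩, rfl, ?_⟩,
        List.Subset.trans hu (List.Subset.trans hPsub hsub)⟩
      simpa using hPy
    · obtain ⟨P, rfl⟩ := List.head?_eq_some_iff.1 hPb
      refine ⟨a :: b :: P, ⟨⟨⟨hab, hPW⟩, List.nodup_cons.2 ⟨ha, hPnd⟩⟩, rfl, ?_⟩, ?_⟩
      · rwa [List.getLast?_cons_cons]
      · simpa using List.cons_subset_cons _ hPsub

lemma IsSimplePathFromTo.isSimpleCycle_cons {P : List V} {x y : V}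
    (hP : G.IsSimplePathFromTo P y x) (hxy : G.Adj x y) : G.IsSimpleCycle (x :: P) := by
  obtain ⟨⟨hPW, hPnd⟩, hPy, hPx⟩ := hP
  obtain ⟨t, rfl⟩ := List.head?_eq_some_iff.1 hPy
  refine ⟨⟨hxy, hPW⟩, by simp, by rw [List.getLast?_cons_cons, hPx]; rfl, ?_⟩
  obtain ⟨s, hs⟩ := List.getLast?_eq_some_iff.1 hPx
  rw [hs] at hPnd ⊢
  rw [← List.cons_append, List.dropLast_concat]
  exact List.nodup_cons.2
    ⟨fun h => List.disjoint_of_nodup_append hPnd h (List.mem_singleton_self x),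
      hPnd.of_append_left⟩

lemma IsSimplePath.exists_isWalkFromTo_getElem {vs : List V} (hp : G.IsSimplePath vs)
    {i j : ℕ} (hij : i ≤ j) (hj : j < vs.length) :
    ∃ W, G.IsWalkFromTo W vs[i] vs[j] ∧
      ∀ k (hk : k < vs.length), vs[k] ∈ W → i ≤ k ∧ k ≤ j := by
  refine ⟨(vs.drop i).take (j + 1 - i), ⟨?_, ?_, ?_⟩, fun k hk hkW => ?_⟩
  · refine isWalk_iff_isChain.2 ⟨?_, ((isWalk_iff_isChain.1 hp.1).2.drop i).take _⟩
    rw [← List.length_pos_iff]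
    simp only [List.length_take, List.length_drop]
    omega
  · rw [List.head?_take, List.head?_drop, if_neg (by omega), List.getElem?_eq_getElem]
  · rw [List.getLast?_eq_getElem?]
    simp only [List.length_take, List.length_drop, List.getElem?_take, List.getElem?_drop]
    rw [if_pos (by omega), show i + (min (j + 1 - i) (vs.length - i) - 1) = j by omega,
      List.getElem?_eq_getElem]
  · obtain ⟨m, hm, hmk⟩ := List.mem_iff_getElem.1 hkW
    simp only [List.length_take, List.length_drop, List.getElem_take, List.getElem_drop] at hm hmk
    have hkm := hp.2.getElem_inj_iff.1 hmk
    omega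

lemma ne_of_adj {x y : V} (h : G.Adj x y) : x ≠ y :=
  fun hxy => G.loopless x (hxy ▸ h)

section SubCactus

variable {H : Subgraph G}

lemma Subgraph.isWalk_toDirGraph_iff {p : List V} :
    H.toDirGraph.IsWalk p ↔ G.IsWalk p ∧ ∀ a ∈ arcs p, H.Adj a.1 a.2 := by
  simp only [isWalk_iff]
  exact ⟨fun h => ⟨⟨h.1, fun a ha => H.adj_sub (h.2 a ha)⟩, h.2⟩, fun h => ⟨h.1.1, h.2⟩⟩

lemma Subgraph.IsCactus.exists_walk (hH : H.IsCactus) {x y : V} (hx : x ∈ H.verts)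
    (hy : y ∈ H.verts) :
    ∃ p, G.IsWalkFromTo p x y ∧ (∀ a ∈ arcs p, H.Adj a.1 a.2) ∧ ∀ v ∈ p, v ∈ H.verts := by
  obtain ⟨p, hpW, hpx, hpy⟩ := hH.2.1 x hx y hy
  obtain ⟨hpW, hpH⟩ := Subgraph.isWalk_toDirGraph_iff.1 hpW
  refine ⟨p, ⟨hpW, hpx, hpy⟩, hpH, fun v hv => ?_⟩
  rcases head?_eq_or_exists_mem_arcs hv with h | ⟨u, hu⟩
  · obtain rfl : x = v := Option.some_inj.1 (hpx.symm.trans h)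
    exact hx
  · exact H.mem_right (hpH _ hu)

lemma Subgraph.IsCactus.adj_of_mem_arcs (hG : G.CactusArcCond) (hH : H.IsCactus)
    {O : List V} (hO : G.IsSimpleCycle O) {a b : V × V} (ha : a ∈ arcs O)
    (hHa : H.Adj a.1 a.2) (hb : b ∈ arcs O) : H.Adj b.1 b.2 := by
  obtain ⟨q, hq, haq⟩ := (hH.2.2 a.1 a.2 hHa).1
  obtain ⟨hqW, hqH⟩ := Subgraph.isWalk_toDirGraph_iff.1 hq.1
  exact hqH b (((hG a.1 a.2 (H.adj_sub hHa)).2 O q hO ha ⟨hqW, hq.2⟩ haq b).1 hb)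

lemma Subgraph.IsCactus.exists_isSimplePathFromTo_not_adj (hG : G.CactusArcCond)
    (hH : H.IsCactus) {x y : V} (hxy : G.Adj x y) (hxyH : ¬ H.Adj x y) {Z : List V}
    (hZ : G.IsWalkFromTo Z y x) :
    ∃ P, G.IsSimplePathFromTo P y x ∧ arcs P ⊆ arcs Z ∧ ∀ a ∈ arcs P, ¬ H.Adj a.1 a.2 := by
  obtain ⟨P, hP, hPZ⟩ := hZ.exists_isSimplePathFromTo
  refine ⟨P, hP, hPZ, fun a ha hHa => hxyH ?_⟩
  have hO := hP.isSimpleCycle_cons hxy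
  obtain ⟨t, rfl⟩ := List.head?_eq_some_iff.1 hP.2.1
  exact hH.adj_of_mem_arcs hG hO (List.mem_cons_of_mem _ ha) hHa (b := (x, y)) (by simp)

lemma Subgraph.IsCactus.mem_of_isWalkFromTo_of_adj_out (hG : G.CactusArcCond)
    (hH : H.IsCactus) {x y u : V} (hxy : G.Adj x y) (hx : x ∈ H.verts) (hy : y ∉ H.verts)
    (hu : u ∈ H.verts) {W : List V} (hW : G.IsWalkFromTo W y u) : x ∈ W := by
  obtain ⟨Q, hQ, hQH, -⟩ := hH.exists_walk hu hx
  obtain ⟨P, hP, hPZ, hPH⟩ := hH.exists_isSimplePathFromTo_not_adj hG hxy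
    (fun h => hy (H.mem_right h)) (hW.append hQ)
  obtain ⟨w, hw⟩ := exists_mem_arcs_of_getLast? hP.2.1 hP.2.2 (ne_of_adj hxy).symm
  have hwZ := hPZ hw
  rw [arcs_append_tail hW.2.2 hQ.2.1, List.mem_append] at hwZ
  rcases hwZ with h | h
  · exact snd_mem_of_mem_arcs h
  · exact absurd (hQH _ h) (hPH _ hw)

lemma Subgraph.IsCactus.mem_of_isWalkFromTo_of_adj_in (hG : G.CactusArcCond)
    (hH : H.IsCactus) {x y u : V} (hxy : G.Adj x y) (hx : x ∉ H.verts) (hy : y ∈ H.verts)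
    (hu : u ∈ H.verts) {W : List V} (hW : G.IsWalkFromTo W u x) : y ∈ W := by
  obtain ⟨Q, hQ, hQH, -⟩ := hH.exists_walk hy hu
  obtain ⟨P, hP, hPZ, hPH⟩ := hH.exists_isSimplePathFromTo_not_adj hG hxy
    (fun h => hx (H.mem_left h)) (hQ.append hW)
  obtain ⟨z, hz⟩ := exists_mem_arcs_of_head? hP.2.1 hP.2.2 (ne_of_adj hxy).symm
  have hzZ := hPZ hz
  rw [arcs_append_tail hQ.2.2 hW.2.1, List.mem_append] at hzZ
  rcases hzZ with h | h
  · exact absurd (hQH _ h) (hPH _ hz)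
  · exact fst_mem_of_mem_arcs h

end SubCactus

lemma singleVert_isCactus (G : DirGraph V) (r : V) : (singleVert G r).IsCactus := by
  refine ⟨⟨r, rfl⟩, fun x hx y hy => ?_, fun _ _ h => h.elim⟩
  obtain rfl : x = r := hx
  obtain rfl : y = x := hy
  exact ⟨[y], trivial, rfl, rfl⟩

lemma mem_C_verts_self (G : DirGraph V) (r w : V) : r ∈ (C G r w).verts := by
  unfold C
  split
  · rfl
  · exact fun _ _ hW => hW (Set.mem_insert r _)

lemma CsubOf_le_CsubOf {W W' : Set V}
    (h : ∀ H : Subgraph G, H.IsCactus → W' ⊆ H.verts → W ⊆ H.verts) :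
    (CsubOf G W).le (CsubOf G W') :=
  ⟨fun _ hx H hH hW' => hx H hH (h H hH hW'),
    fun _ _ hxy => ⟨hxy.1, fun H hH hW' => hxy.2 H hH (h H hH hW')⟩⟩

lemma exists_isCactus_of_not_pre {r v w : V} (h : ¬ pre G r v w) :
    ∃ H : Subgraph G, H.IsCactus ∧ r ∈ H.verts ∧ w ∈ H.verts ∧ v ∉ H.verts := by
  contrapose! h
  by_cases hv : v = r
  · subst hv
    refine ⟨fun x hx => ?_, fun x y hxy => ?_⟩
    · rw [C, if_pos rfl] at hx
      obtain rfl : x = v := hx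
      exact mem_C_verts_self G x w
    · rw [C, if_pos rfl] at hxy
      exact hxy.elim
  by_cases hw : w = r
  · subst hw
    exact absurd (h _ (singleVert_isCactus G w) rfl rfl) hv
  rw [pre, C, C, if_neg hv, if_neg hw]
  exact CsubOf_le_CsubOf fun H hH hrw => Set.insert_subset_iff.2
    ⟨hrw (.inl rfl), Set.singleton_subset_iff.2 (h H hH (hrw (.inl rfl)) (hrw (.inr rfl)))⟩

theorem IsSimplePath.pre_or_pre (hG : G.IsCactus) (r : V) {vs : List V}
    (hp : G.IsSimplePath vs) {i j : ℕ} (hij : i ≤ j) (hj : j + 1 < vs.length) :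
    pre G r vs[i + 1] vs[i] ∨ pre G r vs[j] vs[j + 1] := by
  by_contra! h
  obtain ⟨H, hH, hrH, hiH, hi₁H⟩ := exists_isCactus_of_not_pre h.1
  obtain ⟨K, hK, hrK, hj₁K, hjK⟩ := exists_isCactus_of_not_pre h.2
  have hiK : vs[i] ∈ K.verts := by
    obtain ⟨W, hW, hWvs⟩ := hp.exists_isWalkFromTo_getElem (i := i + 1) (by omega) hj
    obtain ⟨Q, hQ, -, hQK⟩ := hK.exists_walk hj₁K hrK
    rcases List.mem_append.1 <| hH.mem_of_isWalkFromTo_of_adj_out hG.2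
      (hp.1.adj_getElem (by omega)) hiH hi₁H hrH (hW.append hQ) with h | h
    · exact absurd (hWvs i (by omega) h).1 (by omega)
    · exact hQK _ (List.mem_of_mem_tail h)
  obtain ⟨W, hW, hWvs⟩ := hp.exists_isWalkFromTo_getElem hij (by omega)
  exact absurd (hWvs (j + 1) hj <| hK.mem_of_isWalkFromTo_of_adj_in hG.2
    (hp.1.adj_getElem hj) hjK hj₁K hiK hW).2 (by omega)

end DirGraph

open DirGraph in
/-- Every simple path in a rooted cactus digraph is single-dipped with respect
to the preorder `≼`. -/
theorem simple_path_single_dipped {V : Type} (G : DirGraph V) (r : V)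
    (hG : G.IsCactus) (vs : List V) (hp : G.IsSimplePath vs) :
    ∃ k, ∀ i, (h : i + 1 < vs.length) →
      (i < k → pre G r (vs[i+1]'h) (vs[i]'(by omega))) ∧
      (k ≤ i → pre G r (vs[i]'(by omega)) (vs[i+1]'h)) := by
  obtain ⟨k, hk⟩ := Nat.exists_split_of_forall_le_or (n := vs.length - 1)
    (P := fun i => ∀ h : i + 1 < vs.length, pre G r vs[i + 1] vs[i])
    (Q := fun j => ∀ h : j + 1 < vs.length, pre G r vs[j] vs[j + 1])
    fun i j hij hj => (hp.pre_or_pre hG r hij (by omega)).imp (fun h _ => h) (fun h _ => h)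
  exact ⟨k, fun i h =>
    ⟨fun hik => (hk i (by omega)).1 hik h, fun hki => (hk i (by omega)).2 hki h⟩⟩
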